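/- On a path L^n with window size λ, consider a target set S containing i but containing no vertex strictly between i and j, where j is the second-smallest element of S, D[i] = min{x > i : t(x)=2}, and t(D[i])=2 with D[i] ∉ S. If D[i] < j < 2·D[i] − i − λ + 1, then S is not a TWC target set (node D[i] is never influenced). -/

import Mathlib

set_option linter.unusedVariables false

open Finset

variable {V : Type*} [Fintype V] [DecidableEq V]

/-- `influenced G t lam S r` : set of influenced nodes after round `r`. -/
def influenced (G : SimpleGraph V) [DecidableRel G.Adj] (t : V → ℕ) (lam : ℕ)
    (S : Finset V) : ℕ → Finset V
  | 0 => S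
  | r + 1 =>
    let prev := influenced G t lam S r
    let A := if r + 1 ≤ lam then prev else prev \ influenced G t lam S (r - lam)
    prev ∪ Finset.univ.filter fun v => t v ≤ (G.neighborFinset v ∩ A).card
  termination_by r => r
  decreasing_by all_goals omega

/-- `activeSet G t lam S r` : set of active nodes at round `r`. -/
def activeSet (G : SimpleGraph V) [DecidableRel G.Adj] (t : V → ℕ) (lam : ℕ)
    (S : Finset V) (r : ℕ) : Finset V :=
  if r = 0 then ∅
  else if r ≤ lam then influenced G t lam S (r - 1)
  else influenced G t lam S (r - 1) \ influenced G t lam S (r - 1 - lam)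

def isTargetSet (G : SimpleGraph V) [DecidableRel G.Adj] (t : V → ℕ) (lam : ℕ)
    (S : Finset V) : Prop :=
  ∃ r, influenced G t lam S r = Finset.univ

def pathGraph (n : ℕ) : SimpleGraph (Fin n) where
  Adj i j := i.val + 1 = j.val ∨ j.val + 1 = i.val
  symm := ⟨fun i j h => h.symm⟩
  loopless := ⟨fun i h => by rcases h with h | h <;> omega⟩

instance (n : ℕ) : DecidableRel (pathGraph n).Adj :=
  fun i j => inferInstanceAs (Decidable (i.val + 1 = j.val ∨ j.val + 1 = i.val))

def ringGraph (n : ℕ) : SimpleGraph (Fin n) where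
  Adj i j := i ≠ j ∧ ((i.val + 1) % n = j.val ∨ (j.val + 1) % n = i.val)
  symm := ⟨fun i j h => ⟨h.1.symm, h.2.symm⟩⟩
  loopless := ⟨fun i h => h.1 rfl⟩

instance (n : ℕ) : DecidableRel (ringGraph n).Adj :=
  fun i j => inferInstanceAs (Decidable (_ ∧ (_ ∨ _)))

instance : DecidableRel (⊤ : SimpleGraph V).Adj :=
  fun a b => inferInstanceAs (Decidable (a ≠ b))


/-!
The vertex `d` can only be influenced in a round where both of its neighbours are active. Its
left neighbour is influenced no earlier than round `d - 1 - i` (the front spreading right from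
`i`), while its right neighbour can only be reached by the front spreading left from `j` through
threshold-one vertices, which gets there exactly at round `j - d - 1`, and then stays active only
for the `λ` rounds after that. The inequality `j + i + λ ≤ 2d` says that this window closes
before the left neighbour becomes influenced. Since `d` itself is never influenced, the two
sides never interact, and an induction on the round keeps both fronts under control.
-/

section Diffusion

variable {G : SimpleGraph V} [DecidableRel G.Adj] {t : V → ℕ} {lam : ℕ} {S : Finset V}

theorem influenced_zero : influenced G t lam S 0 = S := by
  rw [influenced]

theorem influenced_succ (r : ℕ) :
    influenced G t lam S (r + 1) = influenced G t lam S r ∪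
      univ.filter fun v => t v ≤ #(G.neighborFinset v ∩ activeSet G t lam S (r + 1)) := by
  rw [influenced, activeSet]
  simp

theorem influenced_mono {r s : ℕ} (h : r ≤ s) :
    influenced G t lam S r ⊆ influenced G t lam S s := by
  induction s, h using Nat.le_induction with
  | base => rfl
  | succ s _ ih =>
    rw [influenced_succ]
    exact ih.trans subset_union_left

theorem mem_activeSet_succ {u : V} {r : ℕ} :
    u ∈ activeSet G t lam S (r + 1) ↔
      u ∈ influenced G t lam S r ∧ (lam ≤ r → u ∉ influenced G t lam S (r - lam)) := by
  rw [activeSet, if_neg r.succ_ne_zero, Nat.add_sub_cancel]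
  split_ifs with h
  · exact ⟨fun hu => ⟨hu, fun h' => absurd h' (by omega)⟩, And.left⟩
  · simp only [mem_sdiff, show lam ≤ r by omega, forall_const]

theorem exists_adj_mem_activeSet_of_mem_influenced_succ {v : V} {r : ℕ} (ht : 1 ≤ t v)
    (hv : v ∈ influenced G t lam S (r + 1)) (hv' : v ∉ influenced G t lam S r) :
    ∃ u, G.Adj v u ∧ u ∈ activeSet G t lam S (r + 1) := by
  rw [influenced_succ, mem_union, mem_filter] at hv
  obtain ⟨u, hu⟩ := card_pos.mp (ht.trans (hv.resolve_left hv').2)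
  rw [mem_inter, SimpleGraph.mem_neighborFinset] at hu
  exact ⟨u, hu⟩

theorem neighborFinset_subset_activeSet_of_mem_influenced_succ {v : V} {r : ℕ}
    (ht : G.degree v ≤ t v)
    (hv : v ∈ influenced G t lam S (r + 1)) (hv' : v ∉ influenced G t lam S r) :
    G.neighborFinset v ⊆ activeSet G t lam S (r + 1) := by
  rw [influenced_succ, mem_union, mem_filter] at hv
  rw [← inter_eq_left]
  refine eq_of_subset_of_card_le inter_subset_left ?_
  rw [SimpleGraph.card_neighborFinset_eq_degree]
  exact ht.trans (hv.resolve_left hv').2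

theorem mem_influenced_succ_of_adj {u v : V} {r : ℕ} (ht : t v ≤ 1) (huv : G.Adj v u)
    (hu : u ∈ activeSet G t lam S (r + 1)) : v ∈ influenced G t lam S (r + 1) := by
  rw [influenced_succ, mem_union, mem_filter]
  exact Or.inr ⟨mem_univ v, ht.trans (card_pos.mpr
    ⟨u, mem_inter.mpr ⟨(G.mem_neighborFinset v u).mpr huv, hu⟩⟩)⟩

end Diffusion

theorem pathGraph_adj {n : ℕ} {u v : Fin n} :
    (pathGraph n).Adj u v ↔ (u : ℕ) + 1 = v ∨ (v : ℕ) + 1 = u :=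
  Iff.rfl

theorem pathGraph_degree_le_two {n : ℕ} (v : Fin n) : (pathGraph n).degree v ≤ 2 := by
  rw [← SimpleGraph.card_neighborFinset_eq_degree]
  calc #((pathGraph n).neighborFinset v)
      ≤ #({(v : ℕ) - 1, (v : ℕ) + 1} : Finset ℕ) := by
        refine card_le_card_of_injOn Fin.val (fun u hu => ?_) Fin.val_injective.injOn
        rw [mem_coe, SimpleGraph.mem_neighborFinset, pathGraph_adj] at hu
        simp only [coe_insert, coe_singleton, Set.mem_insert_iff, Set.mem_singleton_iff]
        omega
    _ ≤ 2 := card_le_two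

theorem mem_activeSet_of_adj_of_two_le {n lam : ℕ} {t : Fin n → ℕ} {S : Finset (Fin n)}
    {u v : Fin n} {r : ℕ} (ht : 2 ≤ t v)
    (hv : v ∈ influenced (pathGraph n) t lam S (r + 1))
    (hv' : v ∉ influenced (pathGraph n) t lam S r) (huv : (pathGraph n).Adj v u) :
    u ∈ activeSet (pathGraph n) t lam S (r + 1) :=
  neighborFinset_subset_activeSet_of_mem_influenced_succ
    ((pathGraph_degree_le_two v).trans ht) hv hv' ((SimpleGraph.mem_neighborFinset _ _ _).mpr huv)

/-- `v` lies on a run of threshold-one vertices ending at `j`, close enough to `j` for the front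
spreading left from `j` (one vertex per round) to have reached it by round `r`. -/
def LeftRunReaches {n : ℕ} (t : Fin n → ℕ) (j : Fin n) (r : ℕ) (v : Fin n) : Prop :=
  (j : ℕ) ≤ v + r ∧ ∀ x : Fin n, v ≤ x → x < j → t x = 1

theorem LeftRunReaches.succ_of_adj {n : ℕ} {t : Fin n → ℕ} {j u v : Fin n} {r : ℕ}
    (hu : LeftRunReaches t j r u) (huv : (pathGraph n).Adj v u) (hv : t v = 1) :
    LeftRunReaches t j (r + 1) v := by
  rw [pathGraph_adj] at huv
  refine ⟨by have := hu.1; omega, fun x hvx hxj => ?_⟩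
  rcases eq_or_ne x v with rfl | hxv
  · exact hv
  · exact hu.2 x (by omega) hxj

structure BlockedAt (n lam : ℕ) (t : Fin n → ℕ) (S : Finset (Fin n)) (i j d : Fin n) (r : ℕ) :
    Prop where
  not_mem : d ∉ influenced (pathGraph n) t lam S r
  left_front : ∀ v : Fin n, v < d → v ∈ influenced (pathGraph n) t lam S r → (v : ℕ) ≤ i + r
  right_front : ∀ v : Fin n, d < v → v ≤ j →
    (v ∈ influenced (pathGraph n) t lam S r ↔ LeftRunReaches t j r v)

namespace BlockedAt

variable {n lam : ℕ} {t : Fin n → ℕ} {S : Finset (Fin n)} {i j d : Fin n} {r : ℕ}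

theorem zero (hjS : j ∈ S) (hdS : d ∉ S) (hjsec : ∀ x ∈ S, i < x → j ≤ x) (hid : i < d)
    (hdj : d < j) : BlockedAt n lam t S i j d 0 := by
  refine ⟨by rwa [influenced_zero], fun v hvd hv => ?_, fun v hdv hvj => ?_⟩
  · rw [influenced_zero] at hv
    by_contra! hiv
    have := hjsec v hv (by omega)
    omega
  · rw [influenced_zero]
    refine ⟨fun hv => ?_, fun ⟨hjv, _⟩ => ?_⟩
    · have := hjsec v hv (by omega)
      exact ⟨by omega, fun x _ _ => by omega⟩
    · rwa [show v = j by omega]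

theorem not_mem_succ (h : ∀ s ≤ r, BlockedAt n lam t S i j d s) (htd : t d = 2) (hid : i < d)
    (hdj : d < j) (hupper : (j : ℕ) + i + lam < 2 * d + 1) :
    d ∉ influenced (pathGraph n) t lam S (r + 1) := by
  intro hd
  have hr := h r le_rfl
  have active (u : Fin n) (hu : (pathGraph n).Adj d u) :=
    mem_activeSet_succ.mp (mem_activeSet_of_adj_of_two_le htd.ge hd hr.not_mem hu)
  set u : Fin n := ⟨d - 1, by omega⟩
  set w : Fin n := ⟨d + 1, by omega⟩
  have hu_val : (u : ℕ) = d - 1 := rfl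
  have hw_val : (w : ℕ) = d + 1 := rfl
  have hleft : (d : ℕ) - 1 ≤ i + r :=
    hr.left_front u (by omega) (active u (by rw [pathGraph_adj]; omega)).1
  obtain ⟨hw, hw_old⟩ := active w (by rw [pathGraph_adj]; omega)
  have hwd : d < w := by omega
  have hwj : w ≤ j := by omega
  obtain ⟨-, hrun⟩ := (hr.right_front w hwd hwj).mp hw
  -- `u` is influenced in round `d - 1 - i` at the earliest, `w` in round `j - d - 1` at the
  -- latest, and by `hupper` the active window of `w` closes before the former
  by_cases hlr : lam ≤ r
  · have hlate : ¬ (j : ℕ) ≤ w + (r - lam) := fun hj =>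
      hw_old hlr (((h (r - lam) (by omega)).right_front w hwd hwj).mpr ⟨hj, hrun⟩)
    omega
  · omega

theorem left_front_succ (hr : BlockedAt n lam t S i j d r) (htv : ∀ v, t v = 1 ∨ t v = 2)
    (v : Fin n) (hvd : v < d) (hv : v ∈ influenced (pathGraph n) t lam S (r + 1)) :
    (v : ℕ) ≤ i + (r + 1) := by
  by_cases hv' : v ∈ influenced (pathGraph n) t lam S r
  · have := hr.left_front v hvd hv'
    omega
  obtain ⟨u, huv, hu⟩ :=
    exists_adj_mem_activeSet_of_mem_influenced_succ (by rcases htv v with h | h <;> omega) hv hv'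
  have hu := (mem_activeSet_succ.mp hu).1
  have hud : u ≠ d := fun h => hr.not_mem (h ▸ hu)
  rw [pathGraph_adj] at huv
  have := hr.left_front u (by omega) hu
  omega

theorem reaches_of_mem_succ (hr : BlockedAt n lam t S i j d r) (htv : ∀ v, t v = 1 ∨ t v = 2)
    (v : Fin n) (hdv : d < v) (hvj : v ≤ j) (hv : v ∈ influenced (pathGraph n) t lam S (r + 1)) :
    LeftRunReaches t j (r + 1) v := by
  by_cases hv' : v ∈ influenced (pathGraph n) t lam S r
  · obtain ⟨hjv, hrun⟩ := (hr.right_front v hdv hvj).mp hv'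
    exact ⟨by omega, hrun⟩
  have hvj' : v < j := lt_of_le_of_ne hvj fun hvj => hv' <|
    (hr.right_front v hdv hvj.le).mpr ⟨by omega, fun x _ _ => by omega⟩
  have reaches_of_adj (u : Fin n) (huv : (pathGraph n).Adj v u)
      (hu : u ∈ activeSet (pathGraph n) t lam S (r + 1)) : LeftRunReaches t j r u := by
    have hu := (mem_activeSet_succ.mp hu).1
    have hud : u ≠ d := fun h => hr.not_mem (h ▸ hu)
    rw [pathGraph_adj] at huv
    exact (hr.right_front u (by omega) (by omega)).mp hu
  have htv1 : t v = 1 := by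
    refine (htv v).resolve_right fun htv2 => ?_
    set u : Fin n := ⟨v - 1, by omega⟩
    have hu_val : (u : ℕ) = v - 1 := rfl
    have hadj : (pathGraph n).Adj v u := by rw [pathGraph_adj]; omega
    have := (reaches_of_adj u hadj (mem_activeSet_of_adj_of_two_le htv2.ge hv hv' hadj)).2 v
      (by omega) hvj'
    omega
  obtain ⟨u, huv, hu⟩ := exists_adj_mem_activeSet_of_mem_influenced_succ htv1.ge hv hv'
  exact (reaches_of_adj u huv hu).succ_of_adj huv htv1

theorem mem_succ_of_reaches (h : ∀ s ≤ r, BlockedAt n lam t S i j d s) (hlam : 1 ≤ lam)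
    (v : Fin n) (hdv : d < v) (hvj : v ≤ j) (hreach : LeftRunReaches t j (r + 1) v) :
    v ∈ influenced (pathGraph n) t lam S (r + 1) := by
  obtain ⟨hjv, hrun⟩ := hreach
  have hr := h r le_rfl
  by_cases hjr : (j : ℕ) ≤ v + r
  · exact influenced_mono r.le_succ ((hr.right_front v hdv hvj).mpr ⟨hjr, hrun⟩)
  -- now `j = v + r + 1`: the right neighbour `w` was first influenced in round `r`
  set w : Fin n := ⟨v + 1, by omega⟩
  have hw_val : (w : ℕ) = v + 1 := rfl
  have hwd : d < w := by omega
  have hwj : w ≤ j := by omega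
  have hw : LeftRunReaches t j r w := ⟨by omega, fun x hwx hxj => hrun x (by omega) hxj⟩
  refine mem_influenced_succ_of_adj (hrun v le_rfl (by omega)).le (u := w)
    (by rw [pathGraph_adj]; omega) (mem_activeSet_succ.mpr ⟨(hr.right_front w hwd hwj).mpr hw, ?_⟩)
  intro hlr hw_old
  have := (((h (r - lam) (by omega)).right_front w hwd hwj).mp hw_old).1
  omega

theorem succ (h : ∀ s ≤ r, BlockedAt n lam t S i j d s) (hlam : 1 ≤ lam)
    (htv : ∀ v, t v = 1 ∨ t v = 2) (htd : t d = 2) (hid : i < d) (hdj : d < j)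
    (hupper : (j : ℕ) + i + lam < 2 * d + 1) : BlockedAt n lam t S i j d (r + 1) where
  not_mem := not_mem_succ h htd hid hdj hupper
  left_front := (h r le_rfl).left_front_succ htv
  right_front v hdv hvj :=
    ⟨(h r le_rfl).reaches_of_mem_succ htv v hdv hvj, mem_succ_of_reaches h hlam v hdv hvj⟩

theorem of_windows_disjoint (hlam : 1 ≤ lam) (htv : ∀ v, t v = 1 ∨ t v = 2) (htd : t d = 2)
    (hjS : j ∈ S) (hdS : d ∉ S) (hjsec : ∀ x ∈ S, i < x → j ≤ x) (hid : i < d) (hdj : d < j)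
    (hupper : (j : ℕ) + i + lam < 2 * d + 1) (r : ℕ) : BlockedAt n lam t S i j d r := by
  induction r using Nat.strong_induction_on with
  | _ r ih =>
    cases r with
    | zero => exact zero hjS hdS hjsec hid hdj
    | succ r => exact succ (fun s hs => ih s (by omega)) hlam htv htd hid hdj hupper

end BlockedAt

/-- on a path with `t(0)=t(n-1)=2`, if `S` has smallest element `i`
and second-smallest element `j`, `d = D[i]` is the first threshold-2 vertex after
`i`, `d ∉ S`, and `D[i] < j < 2·D[i] − i − λ + 1` (i.e. `j + i + λ < 2d + 1`),
then `d` is never influenced and `S` is not a TWC target set. -/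
theorem stmt8 (n lam : ℕ) (hlam : 1 ≤ lam) (t : Fin n → ℕ)
    (htv : ∀ v, t v = 1 ∨ t v = 2)
    (S : Finset (Fin n)) (i j d : Fin n)
    (hjS : j ∈ S)
    (hjsec : ∀ x ∈ S, i < x → j ≤ x)
    (hid : i < d) (htd : t d = 2)
    (hdS : d ∉ S)
    (hdj : d < j) (hupper : (j : ℕ) + (i : ℕ) + lam < 2 * (d : ℕ) + 1) :
    (∀ r : ℕ, d ∉ influenced (pathGraph n) t lam S r) ∧
    ¬ isTargetSet (pathGraph n) t lam S := by
  have hblocked := BlockedAt.of_windows_disjoint hlam htv htd hjS hdS hjsec hid hdj hupper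
  exact ⟨fun r => (hblocked r).not_mem, fun ⟨r, hr⟩ => (hblocked r).not_mem (hr ▸ mem_univ d)⟩
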